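/- Let y = Φx + v with x K-sparse with support T, let Λ be a K-element index set, and let x̂_Λ = Φ_Λ† y be the least-squares estimate supported on Λ (extended by zeros outside Λ). Then ‖x − x̂_Λ‖₂ ≤ ((1 − δ_K + 2δ_{2K})‖x_{T∖Λ}‖₂ + (1−δ_K)‖v‖₂) / ((1 − δ_K)√(1 − δ_{2K})). -/

import Mathlib

/-!
The error `e = x - x̂_Λ` is supported on `T ∪ Λ`, hence `2K`-sparse, so `√(1 - δ_{2K}) ‖e‖ ≤ ‖Φ e‖`.
If `P` is the orthogonal projection onto the columns of `Φ` indexed by `Λ`, then `Φ x̂_Λ = P y`, and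
since `1 - P` annihilates these columns, `Φ e = (1 - P) Φ x_{T∖Λ} - P v`. Both projections are
contractions, so `‖Φ e‖ ≤ ‖Φ x_{T∖Λ}‖ + ‖v‖ ≤ √(1 + δ_{2K}) ‖x_{T∖Λ}‖ + ‖v‖`, which is within the
claimed bound because `√(1 + δ) ≤ 1 + δ` and `δ_K δ_{2K} ≥ 0`.
-/

open Matrix Finset

noncomputable def l2 {n : Type*} [Fintype n] (x : n → ℝ) : ℝ :=
  Real.sqrt (∑ i, (x i) ^ 2)

def Sparse {N : ℕ} (K : ℕ) (x : Fin N → ℝ) : Prop :=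
  (Finset.univ.filter (fun i => x i ≠ 0)).card ≤ K

def RIP {M N : ℕ} (Φ : Matrix (Fin M) (Fin N) ℝ) (K : ℕ) (δ : ℝ) : Prop :=
  ∀ x : Fin N → ℝ, Sparse K x →
    (1 - δ) * (l2 x) ^ 2 ≤ (l2 (Φ.mulVec x)) ^ 2 ∧
    (l2 (Φ.mulVec x)) ^ 2 ≤ (1 + δ) * (l2 x) ^ 2

def colSub {M N : ℕ} (Φ : Matrix (Fin M) (Fin N) ℝ) (S : Finset (Fin N)) :
    Matrix (Fin M) {i // i ∈ S} ℝ := fun r c => Φ r c.1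

noncomputable def resid {M N : ℕ} (Φ : Matrix (Fin M) (Fin N) ℝ) (S : Finset (Fin N))
    (y : Fin M → ℝ) : Fin M → ℝ :=
  y - (colSub Φ S).mulVec
    ((((colSub Φ S)ᵀ * colSub Φ S)⁻¹).mulVec ((colSub Φ S)ᵀ.mulVec y))

def restr {N : ℕ} (x : Fin N → ℝ) (S : Finset (Fin N)) : {i // i ∈ S} → ℝ :=
  fun i => x i.1

noncomputable def lsEst {M N : ℕ} (Φ : Matrix (Fin M) (Fin N) ℝ)
    (Λ : Finset (Fin N)) (y : Fin M → ℝ) : Fin N → ℝ :=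
  fun i =>
    if h : i ∈ Λ then
      ((((colSub Φ Λ)ᵀ * colSub Φ Λ)⁻¹).mulVec ((colSub Φ Λ)ᵀ.mulVec y)) ⟨i, h⟩
    else 0

section l2

variable {n : Type*} [Fintype n]

lemma l2_eq_norm (x : n → ℝ) : l2 x = ‖(WithLp.toLp 2 x : EuclideanSpace ℝ n)‖ := by
  simp [l2, EuclideanSpace.norm_eq]

lemma l2_nonneg (x : n → ℝ) : 0 ≤ l2 x := Real.sqrt_nonneg _

lemma l2_eq_zero {x : n → ℝ} : l2 x = 0 ↔ x = 0 := by
  simp [l2_eq_norm]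

lemma l2_sub_le (x y : n → ℝ) : l2 (x - y) ≤ l2 x + l2 y := by
  simpa [l2_eq_norm] using norm_sub_le (WithLp.toLp 2 x : EuclideanSpace ℝ n) (WithLp.toLp 2 y)

lemma l2_mulVec_le_of_isStarProjection [DecidableEq n] {P : Matrix n n ℝ}
    (hP : IsStarProjection P) (u : n → ℝ) : l2 (P *ᵥ u) ≤ l2 u := by
  have hnorm := (hP.map (Matrix.toEuclideanCLM (𝕜 := ℝ) (n := n))).norm_le
  rw [l2_eq_norm, l2_eq_norm, ← Matrix.toEuclideanCLM_toLp]
  exact (ContinuousLinearMap.le_opNorm _ _).trans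
    (mul_le_of_le_one_left (norm_nonneg _) hnorm)

end l2

section ColumnSpaceProjection

variable {m n : Type*} [Fintype m] [Fintype n] [DecidableEq n]

/-- The orthogonal projection onto the column space of `A` when `AᵀA` is invertible. -/
noncomputable def colSpaceProj (A : Matrix m n ℝ) : Matrix m m ℝ := A * (Aᵀ * A)⁻¹ * Aᵀ

lemma isUnit_det_transpose_mul_self {A : Matrix m n ℝ} (hA : Function.Injective A.mulVec) :
    IsUnit (Aᵀ * A).det :=
  (PosDef.conjTranspose_mul_self A hA).isUnit.map detMonoidHom

lemma colSpaceProj_mul_self {A : Matrix m n ℝ} (hA : Function.Injective A.mulVec) :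
    colSpaceProj A * A = A := by
  rw [colSpaceProj, Matrix.mul_assoc, Matrix.mul_assoc,
    nonsing_inv_mul _ (isUnit_det_transpose_mul_self hA), Matrix.mul_one]

lemma isStarProjection_colSpaceProj [DecidableEq m] {A : Matrix m n ℝ}
    (hA : Function.Injective A.mulVec) :
    IsStarProjection (colSpaceProj A) where
  isIdempotentElem := by
    rw [IsIdempotentElem]
    nth_rw 2 [colSpaceProj]
    rw [← Matrix.mul_assoc, ← Matrix.mul_assoc, colSpaceProj_mul_self hA]
    rfl
  isSelfAdjoint := by
    rw [IsSelfAdjoint, star_eq_conjTranspose, conjTranspose_eq_transpose_of_trivial, colSpaceProj,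
      transpose_mul, transpose_mul, transpose_transpose, transpose_nonsing_inv, transpose_mul,
      transpose_transpose, Matrix.mul_assoc]

end ColumnSpaceProjection

section ZeroExtend

variable {N : ℕ}

def zeroExtend (S : Finset (Fin N)) (c : {i // i ∈ S} → ℝ) : Fin N → ℝ :=
  fun i => if h : i ∈ S then c ⟨i, h⟩ else 0

lemma zeroExtend_apply_of_notMem {S : Finset (Fin N)} (c : {i // i ∈ S} → ℝ) {i : Fin N}
    (hi : i ∉ S) : zeroExtend S c i = 0 :=
  dif_neg hi

lemma sum_zeroExtend (S : Finset (Fin N)) (c : {i // i ∈ S} → ℝ) (f : Fin N → ℝ → ℝ)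
    (hf : ∀ i, f i 0 = 0) : ∑ i, f i (zeroExtend S c i) = ∑ i : {i // i ∈ S}, f i (c i) := by
  rw [← Finset.sum_subset (subset_univ S) fun i _ hi => by
      rw [zeroExtend_apply_of_notMem c hi, hf],
    ← Finset.sum_attach, univ_eq_attach]
  exact Finset.sum_congr rfl fun i _ => by simp [zeroExtend]

lemma mulVec_zeroExtend {M : ℕ} (Φ : Matrix (Fin M) (Fin N) ℝ) (S : Finset (Fin N))
    (c : {i // i ∈ S} → ℝ) : Φ *ᵥ zeroExtend S c = colSub Φ S *ᵥ c := by
  ext r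
  simpa [mulVec, dotProduct, colSub] using sum_zeroExtend S c (fun i t => Φ r i * t) (by simp)

lemma l2_zeroExtend (S : Finset (Fin N)) (c : {i // i ∈ S} → ℝ) :
    l2 (zeroExtend S c) = l2 c := by
  rw [l2, l2, sum_zeroExtend S c (fun _ t => t ^ 2) (by simp)]

lemma zeroExtend_restr {x : Fin N → ℝ} {S : Finset (Fin N)} (hx : ∀ i ∉ S, x i = 0) :
    zeroExtend S (restr x S) = x := by
  ext i
  by_cases hi : i ∈ S <;> simp [zeroExtend, restr, hi, hx]

lemma l2_restr {x : Fin N → ℝ} {S : Finset (Fin N)} (hx : ∀ i ∉ S, x i = 0) :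
    l2 (restr x S) = l2 x := by
  rw [← l2_zeroExtend, zeroExtend_restr hx]

lemma sub_zeroExtend_restr_apply_of_notMem {x : Fin N → ℝ} {T : Finset (Fin N)}
    (hx : ∀ i ∉ T, x i = 0) (Λ : Finset (Fin N)) :
    ∀ i ∉ T \ Λ, (x - zeroExtend Λ (restr x Λ)) i = 0 := by
  intro i hi
  by_cases hiΛ : i ∈ Λ
  · simp [zeroExtend, restr, hiΛ]
  · simp [zeroExtend_apply_of_notMem _ hiΛ, hx i fun hiT => hi (mem_sdiff.mpr ⟨hiT, hiΛ⟩)]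

lemma l2_sub_zeroExtend_restr {x : Fin N → ℝ} {T : Finset (Fin N)} (hx : ∀ i ∉ T, x i = 0)
    (Λ : Finset (Fin N)) : l2 (x - zeroExtend Λ (restr x Λ)) = l2 (restr x (T \ Λ)) := by
  rw [← l2_restr (sub_zeroExtend_restr_apply_of_notMem hx Λ)]
  congr 1
  ext i
  simp [restr, zeroExtend_apply_of_notMem _ (mem_sdiff.mp i.2).2]

end ZeroExtend

lemma sparse_of_support_subset {N K : ℕ} {x : Fin N → ℝ} {S : Finset (Fin N)}
    (hx : ∀ i ∉ S, x i = 0) (hS : S.card ≤ K) : Sparse K x := by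
  refine (card_le_card fun i hi => ?_).trans hS
  by_contra h
  exact (mem_filter.mp hi).2 (hx i h)

namespace RIP

variable {M N K : ℕ} {Φ : Matrix (Fin M) (Fin N) ℝ} {δ : ℝ}

lemma sqrt_one_sub_mul_l2_le (h : RIP Φ K δ) {x : Fin N → ℝ} (hx : Sparse K x) :
    √(1 - δ) * l2 x ≤ l2 (Φ *ᵥ x) := by
  rw [← Real.sqrt_sq (l2_nonneg x), ← Real.sqrt_mul' _ (sq_nonneg _),
    ← Real.sqrt_sq (l2_nonneg (Φ *ᵥ x))]
  exact Real.sqrt_le_sqrt (h x hx).1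

lemma l2_mulVec_le (h : RIP Φ K δ) {x : Fin N → ℝ} (hx : Sparse K x) :
    l2 (Φ *ᵥ x) ≤ √(1 + δ) * l2 x := by
  rw [← Real.sqrt_sq (l2_nonneg x), ← Real.sqrt_mul' _ (sq_nonneg _),
    ← Real.sqrt_sq (l2_nonneg (Φ *ᵥ x))]
  exact Real.sqrt_le_sqrt (h x hx).2

lemma injective_colSub (h : RIP Φ K δ) (hδ : δ < 1) {S : Finset (Fin N)} (hS : S.card ≤ K) :
    Function.Injective (colSub Φ S).mulVec := by
  refine (injective_iff_map_eq_zero (colSub Φ S).mulVecLin).mpr fun c hc => ?_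
  have hsparse : Sparse K (zeroExtend S c) :=
    sparse_of_support_subset (fun _ => zeroExtend_apply_of_notMem c) hS
  have hle := h.sqrt_one_sub_mul_l2_le hsparse
  rw [mulVec_zeroExtend, l2_zeroExtend, show colSub Φ S *ᵥ c = 0 from hc, l2_eq_zero.mpr rfl,
    ← mul_zero √(1 - δ)] at hle
  exact l2_eq_zero.mp <|
    (le_of_mul_le_mul_left hle (Real.sqrt_pos.mpr (sub_pos.mpr hδ))).antisymm (l2_nonneg c)

end RIP

section LeastSquares

variable {M N : ℕ} (Φ : Matrix (Fin M) (Fin N) ℝ) (Λ : Finset (Fin N))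

lemma mulVec_lsEst (y : Fin M → ℝ) : Φ *ᵥ lsEst Φ Λ y = colSpaceProj (colSub Φ Λ) *ᵥ y := by
  rw [show lsEst Φ Λ y = zeroExtend Λ _ from rfl, mulVec_zeroExtend, colSpaceProj,
    ← mulVec_mulVec, ← mulVec_mulVec]

lemma l2_mulVec_sub_lsEst_le {Φ Λ} (hΛ : Function.Injective (colSub Φ Λ).mulVec)
    (x : Fin N → ℝ) (v : Fin M → ℝ) :
    l2 (Φ *ᵥ (x - lsEst Φ Λ (Φ *ᵥ x + v))) ≤
      l2 (Φ *ᵥ (x - zeroExtend Λ (restr x Λ))) + l2 v := by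
  have hP := isStarProjection_colSpaceProj hΛ
  have hresid : Φ *ᵥ (x - lsEst Φ Λ (Φ *ᵥ x + v)) =
      (1 - colSpaceProj (colSub Φ Λ)) *ᵥ (Φ *ᵥ (x - zeroExtend Λ (restr x Λ))) -
        colSpaceProj (colSub Φ Λ) *ᵥ v := by
    rw [mulVec_sub Φ, mulVec_sub Φ, mulVec_lsEst, mulVec_zeroExtend, sub_mulVec, one_mulVec,
      mulVec_sub (colSpaceProj _), mulVec_mulVec (restr x Λ), colSpaceProj_mul_self hΛ, mulVec_add]
    abel
  rw [hresid]
  exact (l2_sub_le _ _).trans <| add_le_add (l2_mulVec_le_of_isStarProjection hP.one_sub _)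
    (l2_mulVec_le_of_isStarProjection hP v)

end LeastSquares

theorem ls_estimate_error_general {M N K : ℕ} (Φ : Matrix (Fin M) (Fin N) ℝ)
    (x : Fin N → ℝ) (T Λ : Finset (Fin N)) (v y : Fin M → ℝ)
    (hy : y = Φ.mulVec x + v) (hT : T.card = K)
    (hsupp : ∀ i, i ∉ T → x i = 0) (hΛcard : Λ.card = K)
    (δK δ2K : ℝ) (hδK0 : 0 ≤ δK) (hle : δK ≤ δ2K) (hδ2K1 : δ2K < 1)
    (hRIP2K : RIP Φ (2 * K) δ2K) :
    l2 (x - lsEst Φ Λ y) ≤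
      ((1 - δK + 2 * δ2K) * l2 (restr x (T \ Λ)) + (1 - δK) * l2 v) /
        ((1 - δK) * Real.sqrt (1 - δ2K)) := by
  have hδ2K0 : 0 ≤ δ2K := hδK0.trans hle
  have he_supp : ∀ i ∉ T ∪ Λ, (x - lsEst Φ Λ y) i = 0 := by
    intro i hi
    rw [mem_union, not_or] at hi
    simp [hsupp i hi.1, lsEst, hi.2]
  have hlower := hRIP2K.sqrt_one_sub_mul_l2_le
    (sparse_of_support_subset he_supp ((card_union_le T Λ).trans (by omega)))
  have hresid := l2_mulVec_sub_lsEst_le (hRIP2K.injective_colSub hδ2K1 (S := Λ) (by omega)) x v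
  have hupper := hRIP2K.l2_mulVec_le (sparse_of_support_subset
    (sub_zeroExtend_restr_apply_of_notMem hsupp Λ) ((card_le_card sdiff_subset).trans (by omega)))
  rw [← hy] at hresid
  rw [l2_sub_zeroExtend_restr hsupp] at hupper
  have hsqrt : √(1 + δ2K) ≤ 1 + δ2K := Real.sqrt_le_iff.mpr ⟨by linarith, by nlinarith⟩
  rw [le_div_iff₀ (mul_pos (by linarith) (Real.sqrt_pos.mpr (by linarith)))]
  nlinarith [mul_le_mul_of_nonneg_right hsqrt (l2_nonneg (restr x (T \ Λ))),
    l2_nonneg (restr x (T \ Λ)),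
    mul_nonneg (mul_nonneg hδK0 hδ2K0) (l2_nonneg (restr x (T \ Λ)))]

theorem ls_estimate_error {M N K : ℕ} (Φ : Matrix (Fin M) (Fin N) ℝ)
    (x : Fin N → ℝ) (T Λ : Finset (Fin N)) (v y : Fin M → ℝ)
    (hy : y = Φ.mulVec x + v) (hT : T.card = K)
    (hsupp : ∀ i, i ∉ T → x i = 0) (hΛcard : Λ.card = K)
    (δK δ2K : ℝ) (hδK0 : 0 ≤ δK) (hle : δK ≤ δ2K) (hδ2K1 : δ2K < 1)
    (hRIPK : RIP Φ K δK) (hRIP2K : RIP Φ (2 * K) δ2K) :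
    l2 (x - lsEst Φ Λ y) ≤
      ((1 - δK + 2 * δ2K) * l2 (restr x (T \ Λ)) + (1 - δK) * l2 v) /
        ((1 - δK) * Real.sqrt (1 - δ2K)) :=
  ls_estimate_error_general Φ x T Λ v y hy hT hsupp hΛcard δK δ2K hδK0 hle hδ2K1 hRIP2K
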